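/- For every n-point configuration P_1,...,P_n in R^m there exists epsilon > 0 such that any configuration Q_1,...,Q_n within distance epsilon of (P_1,...,P_n) having the same multiset of squared pairwise distances as P_1,...,P_n lies in the same orbit as P_1,...,P_n under the Euclidean group of R^m. -/

import Mathlib

/-- The multiset of squared pairwise distances of an `n`-point configuration in `ℝ^m`. -/
noncomputable def sqDistMultiset {n m : ℕ} (P : Fin n → EuclideanSpace ℝ (Fin m)) : Multiset ℝ :=
  ((Finset.univ : Finset (Fin n × Fin n)).filter fun p => p.1 < p.2).val.map
    fun p => dist (P p.1) (P p.2) ^ 2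

/-!
The squared distances of `P` form a finite set of reals, so each of them is isolated among the
others. A small perturbation `Q` moves every squared distance by little; if the multisets agree,
each squared distance of `Q` must be one of those of `P`, hence the corresponding one. So `Q` has
exactly the pairwise distances of `P`, and two configurations with equal pairwise distances are
congruent: after translating a point to the origin, equal distances give equal Gram matrices, and a
linear isometry between the spans of the two configurations extends to the whole space.
-/

open Topology LinearMap
open scoped RealInnerProductSpace

theorem LinearMap.exists_comp_rangeRestrict_eq_of_ker_le {R M N P : Type*} [Ring R]
    [AddCommGroup M] [AddCommGroup N] [AddCommGroup P] [Module R M] [Module R N] [Module R P]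
    {T : M →ₗ[R] N} {U : M →ₗ[R] P} (h : ker T ≤ ker U) :
    ∃ f : range T →ₗ[R] P, f ∘ₗ T.rangeRestrict = U :=
  ⟨(ker T).liftQ U h ∘ₗ T.quotKerEquivRange.symm.toLinearMap, by
    ext c
    simp [LinearMap.rangeRestrict, LinearMap.codRestrict,
      LinearMap.quotKerEquivRange_symm_apply_image]⟩

section InnerProductSpace

variable {ι V : Type*} [NormedAddCommGroup V] [InnerProductSpace ℝ V]

theorem norm_linearCombination_eq_of_inner_eq {v w : ι → V}
    (h : ∀ i j, ⟪w i, w j⟫ = ⟪v i, v j⟫) (c : ι →₀ ℝ) :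
    ‖Finsupp.linearCombination ℝ w c‖ = ‖Finsupp.linearCombination ℝ v c‖ := by
  have hinner : ⟪Finsupp.linearCombination ℝ w c, Finsupp.linearCombination ℝ w c⟫ =
      ⟪Finsupp.linearCombination ℝ v c, Finsupp.linearCombination ℝ v c⟫ := by
    simp only [Finsupp.linearCombination_apply, Finsupp.sum, sum_inner, inner_sum,
      real_inner_smul_left, real_inner_smul_right, h]
  rw [real_inner_self_eq_norm_sq, real_inner_self_eq_norm_sq] at hinner
  exact (sq_eq_sq₀ (norm_nonneg _) (norm_nonneg _)).1 hinner

theorem LinearIsometryEquiv.exists_apply_eq_of_inner_eq [FiniteDimensional ℝ V] {v w : ι → V}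
    (h : ∀ i j, ⟪w i, w j⟫ = ⟪v i, v j⟫) : ∃ g : V ≃ₗᵢ[ℝ] V, ∀ i, g (v i) = w i := by
  set T := Finsupp.linearCombination ℝ v
  set U := Finsupp.linearCombination ℝ w
  have hnorm := norm_linearCombination_eq_of_inner_eq h
  have hker : ker T ≤ ker U := fun c hc => by
    rw [mem_ker, ← norm_eq_zero, hnorm, norm_eq_zero, ← mem_ker]
    exact hc
  obtain ⟨f, hf⟩ := exists_comp_rangeRestrict_eq_of_ker_le hker
  have hfT (c : ι →₀ ℝ) : f (T.rangeRestrict c) = U c := LinearMap.congr_fun hf c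
  let L : range T →ₗᵢ[ℝ] V :=
    { toLinearMap := f
      norm_map' := by
        rintro ⟨_, c, rfl⟩
        exact (congrArg norm (hfT c)).trans (hnorm c) }
  refine ⟨L.extend.toLinearIsometryEquiv rfl, fun i => ?_⟩
  have hvi : v i = T.rangeRestrict (Finsupp.single i 1) := by simp [T]
  rw [LinearIsometry.toLinearIsometryEquiv_apply, hvi, L.extend_apply]
  exact (hfT _).trans (by simp [U])

theorem Congruent.exists_isometryEquiv_apply_eq [FiniteDimensional ℝ V] {P Q : ι → V}
    (h : Congruent P Q) : ∃ g : V ≃ᵢ V, ∀ i, g (P i) = Q i := by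
  rcases isEmpty_or_nonempty ι with hι | ⟨⟨i₀⟩⟩
  · exact ⟨IsometryEquiv.refl V, isEmptyElim⟩
  have hdist := congruent_iff_dist_eq.1 h
  obtain ⟨L, hL⟩ := LinearIsometryEquiv.exists_apply_eq_of_inner_eq
    (v := fun i => P i - P i₀) (w := fun i => Q i - Q i₀) fun i j => by
      simp only [real_inner_eq_norm_mul_self_add_norm_mul_self_sub_norm_sub_mul_self_div_two,
        sub_sub_sub_cancel_right, ← dist_eq_norm, hdist]
  refine ⟨(IsometryEquiv.subRight (P i₀)).trans
    (L.toIsometryEquiv.trans (IsometryEquiv.addRight (Q i₀))), fun i => ?_⟩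
  simp [hL]

end InnerProductSpace

theorem ContinuousAt.eventually_mem_finite_imp_eq {X Y : Type*} [TopologicalSpace X]
    [TopologicalSpace Y] [T1Space Y] {f : X → Y} {x : X} (hf : ContinuousAt f x) {s : Set Y}
    (hs : s.Finite) : ∀ᶠ y in 𝓝 x, f y ∈ s → f y = f x := by
  have hnhds : (s \ {f x})ᶜ ∈ 𝓝 (f x) := (hs.sdiff).isClosed.compl_mem_nhds (by simp)
  filter_upwards [hf hnhds] with y hy hys
  simpa [hys] using hy

theorem sq_dist_mem_sqDistMultiset {n m : ℕ} (P : Fin n → EuclideanSpace ℝ (Fin m))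
    {i j : Fin n} (hij : i ≠ j) : dist (P i) (P j) ^ 2 ∈ sqDistMultiset P := by
  unfold sqDistMultiset
  rcases hij.lt_or_gt with h | h
  · exact Multiset.mem_map.2 ⟨(i, j), by simpa using h, rfl⟩
  · exact Multiset.mem_map.2 ⟨(j, i), by simpa using h, by rw [dist_comm]⟩

theorem eventually_dist_eq_of_sqDistMultiset_eq {n m : ℕ} (P : Fin n → EuclideanSpace ℝ (Fin m)) :
    ∀ᶠ Q in 𝓝 P, sqDistMultiset Q = sqDistMultiset P →
      ∀ i j, dist (Q i) (Q j) = dist (P i) (P j) := by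
  have hloc : ∀ᶠ Q in 𝓝 P, ∀ i j, dist (Q i) (Q j) ^ 2 ∈ {x | x ∈ sqDistMultiset P} →
      dist (Q i) (Q j) ^ 2 = dist (P i) (P j) ^ 2 :=
    Filter.eventually_all.2 fun i => Filter.eventually_all.2 fun j =>
      ContinuousAt.eventually_mem_finite_imp_eq (by fun_prop) (Multiset.finite_toSet _)
  filter_upwards [hloc] with Q hQ hQP i j
  obtain rfl | hij := eq_or_ne i j
  · simp
  · exact (sq_eq_sq₀ dist_nonneg dist_nonneg).1 (hQ i j (hQP ▸ sq_dist_mem_sqDistMultiset Q hij))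

theorem stmt10 {n m : ℕ} (P : Fin n → EuclideanSpace ℝ (Fin m)) :
    ∃ ε > 0, ∀ Q : Fin n → EuclideanSpace ℝ (Fin m),
      dist Q P < ε → sqDistMultiset Q = sqDistMultiset P →
      ∃ g : EuclideanSpace ℝ (Fin m) ≃ᵢ EuclideanSpace ℝ (Fin m),
        ∀ i, Q i = g (P i) := by
  obtain ⟨ε, hε, hdist⟩ := Metric.eventually_nhds_iff.1 (eventually_dist_eq_of_sqDistMultiset_eq P)
  refine ⟨ε, hε, fun Q hQP hsq => ?_⟩
  obtain ⟨g, hg⟩ := Congruent.exists_isometryEquiv_apply_eq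
    (congruent_iff_dist_eq.2 fun i j => (hdist hQP hsq i j).symm)
  exact ⟨g, fun i => (hg i).symm⟩
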